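/- Let g_1, …, g_v be a standard linear realization of a multiset L, and suppose there are an index i, an integer w ≥ 1 with i + w ≤ v, and a positive integer x such that g_{i+j} = g_i + j·x for j = 0, 1, …, w (so this consecutive segment contributes w differences equal to x). If M is a multiset of size w that has a perfect linear realization, then the multiset (L − {x^w}) ∪ x·M, obtained from L by deleting w copies of x and adjoining the multiset x·M = {x·m : m ∈ M}, has a standard linear realization. -/

import Mathlib

/-- The multiset of absolute differences of consecutive entries of a list of naturals. -/
def linDiffs (l : List ℕ) : Multiset ℕ :=
  ↑(List.zipWith (fun a b => (a - b) + (b - a)) l l.tail)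

/-- `l` is a linear realization of the multiset `L`: it lists `0, …, |L|`
(each exactly once) and its consecutive absolute differences form `L`. -/
def IsLinearRealization (L : Multiset ℕ) (l : List ℕ) : Prop :=
  l.Perm (List.range (Multiset.card L + 1)) ∧ linDiffs l = L

def HasLinearRealization (L : Multiset ℕ) : Prop :=
  ∃ l : List ℕ, IsLinearRealization L l

/-- A standard linear realization starts at `0`. -/
def HasStandardLinearRealization (L : Multiset ℕ) : Prop :=
  ∃ l : List ℕ, IsLinearRealization L l ∧ l.head? = some 0

/-- A perfect linear realization starts at `0` and ends at `v - 1 = |L|`. -/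
def HasPerfectLinearRealization (L : Multiset ℕ) : Prop :=
  ∃ l : List ℕ, IsLinearRealization L l ∧ l.head? = some 0 ∧
    l.getLast? = some (Multiset.card L)

/-- The multiset of cyclic edge-lengths `min(|gᵢ₊₁ - gᵢ|, v - |gᵢ₊₁ - gᵢ|)`
of consecutive entries of a list of naturals. -/
def cycDiffs (v : ℕ) (l : List ℕ) : Multiset ℕ :=
  ↑(List.zipWith (fun a b => min ((a - b) + (b - a)) (v - ((a - b) + (b - a)))) l l.tail)

/-- `L` is (cyclically) realizable in `K_v`: some Hamiltonian path on the vertex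
set `{0, …, v-1}` has `L` as its multiset of edge-lengths. -/
def IsRealizable (v : ℕ) (L : Multiset ℕ) : Prop :=
  ∃ l : List ℕ, l.Perm (List.range v) ∧ cycDiffs v l = L

/-- The multiset `{1^a, x^b, y^c}`. -/
def mset3 (a b c x y : ℕ) : Multiset ℕ :=
  Multiset.replicate a 1 + Multiset.replicate b x + Multiset.replicate c y

/-- With `b = q'x + r'`, `0 ≤ r' < x`: `ω(x,b) = x - 1` if `q' = 0`, `r' = 1`,
or at least one of `x`, `r'` is even; otherwise `ω(x,b) = x`. -/
def omegaBHR (x b : ℕ) : ℕ :=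
  if b / x = 0 ∨ b % x = 1 ∨ Even x ∨ Even (b % x) then x - 1 else x

/-- The reduced form `ĝ = min(g, v - g)`. -/
def reducedForm (v g : ℕ) : ℕ := min g (v - g)

/-- The function `f` of Theorem 3.7 (counterexample characterization refined). -/
def fBHR (u w : ℕ) : ℕ :=
  if Even u ∧ Even w then w - 1
  else if u = 3 ∨ (Even u ∧ ¬ Even w) then u + w - 2
  else u + w - 1

/-- A multiset `L` of size `v - 1` with elements in `{1, …, ⌊v/2⌋}` is admissible
if for every divisor `d` of `v` the number of elements of `L` divisible by `d`
is at most `v - d`. -/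
def IsAdmissible (v : ℕ) (L : Multiset ℕ) : Prop :=
  Multiset.card L = v - 1 ∧ (∀ z ∈ L, 1 ≤ z ∧ z ≤ v / 2) ∧
  ∀ d : ℕ, d ∣ v → Multiset.card (L.filter (fun z => d ∣ z)) ≤ v - d

/-!
The segment `c, c + x, …, c + w x` is the perfect realization `0, 1, …, w` of `{1^w}`,
scaled by `x` and shifted by `c`. Replace it by `c + x m₁, …, c + x m_{w+1}`, where `m` is a
perfect realization of `M`. Both blocks visit the same vertices and have the same end points
`c` and `c + w x`, so the differences outside the block are untouched, while those inside
become `x · M` instead of `{x^w}`.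
-/

lemma linDiffs_cons_cons (a b : ℕ) (t : List ℕ) :
    linDiffs (a :: b :: t) = Nat.dist a b ::ₘ linDiffs (b :: t) := rfl

lemma linDiffs_append_cons (u : List ℕ) (b : ℕ) (v : List ℕ) :
    linDiffs (u ++ b :: v) = linDiffs (u ++ [b]) + linDiffs (b :: v) := by
  induction u with
  | nil => simp [linDiffs]
  | cons a u ih =>
    cases u with
    | nil => simp [linDiffs]
    | cons c u =>
      simp only [List.cons_append, linDiffs_cons_cons] at ih ⊢
      rw [ih, Multiset.cons_add]

lemma linDiffs_append_append {a s b : List ℕ} {c e : ℕ}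
    (hc : s.head? = some c) (he : s.getLast? = some e) :
    linDiffs (a ++ s ++ b) = linDiffs (a ++ [c]) + linDiffs s + linDiffs (e :: b) := by
  obtain ⟨t, rfl⟩ : ∃ t, s = c :: t := List.head?_eq_some_iff.mp hc
  obtain ⟨u, hu⟩ : ∃ u, c :: t = u ++ [e] := List.getLast?_eq_some_iff.mp he
  have hs : linDiffs ((c :: t) ++ b) = linDiffs (c :: t) + linDiffs (e :: b) := by
    rw [hu, List.append_assoc, List.singleton_append, linDiffs_append_cons]
  rw [List.append_assoc, List.cons_append, linDiffs_append_cons, ← List.cons_append, hs,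
    add_assoc]

lemma linDiffs_range' (c n x : ℕ) :
    linDiffs (List.range' c (n + 1) x) = Multiset.replicate n x := by
  induction n generalizing c with
  | zero => rfl
  | succ n ih =>
    rw [List.range'_succ, List.range'_succ, linDiffs_cons_cons, ← List.range'_succ, ih,
      Nat.dist_eq_sub_of_le (Nat.le_add_right c x), Nat.add_sub_cancel_left,
      Multiset.replicate_succ]

lemma linDiffs_map_affine (c x : ℕ) (m : List ℕ) :
    linDiffs (m.map (c + x * ·)) = (linDiffs m).map (x * ·) := by
  unfold linDiffs
  rw [← List.map_tail, List.zipWith_map, Multiset.map_coe, List.map_zipWith]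
  congr 2
  funext a b
  exact (Nat.dist_add_add_left c (x * a) (x * b)).trans (Nat.dist_mul_left x a b)

lemma List.head?_append_append_of_head?_eq {α : Type*} {a s t b : List α}
    (h : s.head? = t.head?) : (a ++ s ++ b).head? = (a ++ t ++ b).head? := by
  simp only [List.append_assoc, List.head?_append, h]

def IsPerfectLinearRealization (M : Multiset ℕ) (m : List ℕ) : Prop :=
  IsLinearRealization M m ∧ m.head? = some 0 ∧ m.getLast? = some (Multiset.card M)

lemma isPerfectLinearRealization_range (w : ℕ) :
    IsPerfectLinearRealization (Multiset.replicate w 1) (List.range (w + 1)) := by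
  refine ⟨⟨by simp, ?_⟩, by simp [List.head?_range], by simp [List.getLast?_range]⟩
  rw [List.range_eq_range', linDiffs_range']

lemma IsPerfectLinearRealization.perm {M N : Multiset ℕ} {m n : List ℕ}
    (hm : IsPerfectLinearRealization M m) (hn : IsPerfectLinearRealization N n)
    (hMN : Multiset.card M = Multiset.card N) : m.Perm n :=
  hm.1.1.trans (hMN ▸ hn.1.1.symm)

lemma IsLinearRealization.replace_block {L M N : Multiset ℕ} {a b m n : List ℕ} {c x : ℕ}
    (hl : IsLinearRealization L (a ++ n.map (c + x * ·) ++ b))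
    (hn : IsPerfectLinearRealization N n) (hm : IsPerfectLinearRealization M m)
    (hMN : Multiset.card M = Multiset.card N) :
    IsLinearRealization (L - N.map (x * ·) + M.map (x * ·)) (a ++ m.map (c + x * ·) ++ b) := by
  have hmn : m.Perm n := hm.perm hn hMN
  obtain ⟨hperm, hdiffs⟩ := hl
  obtain ⟨⟨-, hndiffs⟩, hn₀, hnN⟩ := hn
  obtain ⟨⟨-, hmdiffs⟩, hm₀, hmM⟩ := hm
  set e := c + x * Multiset.card N with he
  have hL : L = linDiffs (a ++ [c]) + N.map (x * ·) + linDiffs (e :: b) := by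
    rw [← hdiffs, linDiffs_append_append (c := c) (e := e) (by simp [hn₀]) (by simp [hnN, he]),
      linDiffs_map_affine, hndiffs]
  have hsub : L - N.map (x * ·) = linDiffs (a ++ [c]) + linDiffs (e :: b) := by
    rw [hL, add_right_comm, add_tsub_cancel_right]
  refine ⟨?_, ?_⟩
  · have hcard : Multiset.card (L - N.map (x * ·) + M.map (x * ·)) = Multiset.card L := by
      rw [hsub, hL]
      simp only [Multiset.card_add, Multiset.card_map, hMN]
      omega
    rw [hcard]
    exact ((hmn.map _).append_left a).append_right b |>.trans hperm
  · rw [linDiffs_append_append (c := c) (e := e) (by simp [hm₀]) (by simp [hmM, hMN, he]),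
      linDiffs_map_affine, hmdiffs, hsub, add_right_comm]

lemma eq_take_append_map_range_append_drop {l : List ℕ} {i w x : ℕ} (hiw : i + w < l.length)
    (hseg : ∀ j ≤ w, l.getD (i + j) 0 = l.getD i 0 + j * x) :
    l = l.take i ++ (List.range (w + 1)).map (l.getD i 0 + x * ·) ++ l.drop (i + (w + 1)) := by
  have hblock : (l.drop i).take (w + 1) = (List.range (w + 1)).map (l.getD i 0 + x * ·) := by
    have hlen : ((l.drop i).take (w + 1)).length = w + 1 := by
      simp only [List.length_take, List.length_drop]; omega
    refine List.ext_getElem (by rw [hlen, List.length_map, List.length_range]) fun j hj _ => ?_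
    have hj : j ≤ w := by omega
    have := hseg j hj
    rw [List.getD_eq_getElem l 0 (by omega)] at this
    simp [this, Nat.mul_comm]
  rw [← hblock, List.append_assoc, ← List.drop_drop, List.take_append_drop,
    List.take_append_drop]

theorem stmt11_general (L M : Multiset ℕ) (x : ℕ) (l : List ℕ)
    (hl : IsLinearRealization L l) (hstd : l.head? = some 0)
    (i w : ℕ) (hiw : i + w < l.length)
    (hseg : ∀ j : ℕ, j ≤ w → l.getD (i + j) 0 = l.getD i 0 + j * x)
    (hM : Multiset.card M = w) (hMperf : HasPerfectLinearRealization M) :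
    HasStandardLinearRealization
      (L - Multiset.replicate w x + Multiset.map (fun m => x * m) M) := by
  obtain ⟨m, hm⟩ : ∃ m, IsPerfectLinearRealization M m := hMperf
  have hsplit := eq_take_append_map_range_append_drop hiw hseg
  have hl' := (hsplit ▸ hl).replace_block (isPerfectLinearRealization_range w) hm (by simp [hM])
  rw [Multiset.map_replicate, mul_one] at hl'
  refine ⟨_, hl', ?_⟩
  conv_rhs => rw [← hstd, hsplit]
  exact List.head?_append_append_of_head?_eq (by simp [hm.2.1, List.head?_range])

/-- Reordering one generic fauxset. If a standard linear
realization `l` of `L` contains a consecutive segment of `w` differences all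
equal to `x` (positions `i, i+1, …, i+w`, 0-indexed), and `M` is a multiset of
size `w` with a perfect linear realization, then `(L - {x^w}) ∪ x·M` has a
standard linear realization. -/
theorem stmt11 (L M : Multiset ℕ) (x : ℕ) (hx : 0 < x) (l : List ℕ)
    (hl : IsLinearRealization L l) (hstd : l.head? = some 0)
    (i w : ℕ) (hw : 1 ≤ w) (hiw : i + w < l.length)
    (hseg : ∀ j : ℕ, j ≤ w → l.getD (i + j) 0 = l.getD i 0 + j * x)
    (hM : Multiset.card M = w) (hMperf : HasPerfectLinearRealization M) :
    HasStandardLinearRealization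
      (L - Multiset.replicate w x + Multiset.map (fun m => x * m) M) :=
  stmt11_general L M x l hl hstd i w hiw hseg hM hMperf
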